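/- Let L be a positive integer. For ℓ = 1, …, L set d(ℓ) = (−1)^ℓ · C(L, ℓ) · ∏_{k=0}^{ℓ−1} (1/2 − L + k)/(3/2 + k), and define D_L(z) = 1 + ∑_{ℓ=1}^{L} d(ℓ) z^{−ℓ} for z ∈ ℂ \ {0}. Then for every w ∈ ℂ \ {0}, with z = w², one has D_L(z) = (2(2L+1))^{−1} z^{−L} [(1 + w)^{2L+1} + (1 − w)^{2L+1}]. -/

import Mathlib

/-!
Both `d(ℓ)` and `C(2L+1, 2ℓ+1) / (2L+1)` satisfy the recurrence
`x(ℓ+1) (2ℓ+2)(2ℓ+3) = x(ℓ) (2L-2ℓ)(2L-2ℓ-1)` and equal `1` at `ℓ = 0`, so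
`D_L(w²) = ∑_{ℓ ≤ L} C(2L+1, 2ℓ+1) w^{-2ℓ} / (2L+1)`. On the other side, in
`(1 + w)^{2L+1} + (1 - w)^{2L+1}` the binomial terms with odd powers of `w` cancel, leaving
`2 ∑_{ℓ ≤ L} C(2L+1, 2ℓ+1) w^{2(L-ℓ)}`.
-/

open Finset

theorem Nat.cast_choose_succ_mul {R : Type*} [CommRing R] (n k : ℕ) :
    (n.choose (k + 1) : R) * (k + 1) = n.choose k * (n - k) := by
  rcases le_or_gt k n with hkn | hnk
  · simpa [Nat.cast_sub hkn] using congrArg (Nat.cast : ℕ → R) (Nat.choose_succ_right_eq n k)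
  · simp [Nat.choose_eq_zero_of_lt hnk, Nat.choose_eq_zero_of_lt (hnk.trans (Nat.lt_succ_self k))]

theorem Nat.cast_choose_add_two_mul {R : Type*} [CommRing R] (n k : ℕ) :
    (n.choose (k + 2) : R) * ((k + 1) * (k + 2)) = n.choose k * ((n - k) * (n - k - 1)) := by
  have h₁ := Nat.cast_choose_succ_mul (R := R) n k
  have h₂ := Nat.cast_choose_succ_mul (R := R) n (k + 1)
  push_cast [add_assoc, one_add_one_eq_two] at h₂
  linear_combination (k + 1 : R) * h₂ + (n - k - 1 : R) * h₁

theorem Finset.sum_range_two_mul {M : Type*} [AddCommMonoid M] (f : ℕ → M) (n : ℕ) :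
    ∑ k ∈ range (2 * n), f k = ∑ j ∈ range n, (f (2 * j) + f (2 * j + 1)) := by
  induction n with
  | zero => simp
  | succ n ih =>
    rw [show 2 * (n + 1) = 2 * n + 1 + 1 by ring, sum_range_succ, sum_range_succ, ih,
      sum_range_succ, add_assoc]

theorem one_add_pow_add_one_sub_pow {R : Type*} [CommRing R] (n : ℕ) (w : R) :
    (1 + w) ^ (2 * n + 1) + (1 - w) ^ (2 * n + 1) =
      2 * ∑ ℓ ∈ range (n + 1), ((2 * n + 1).choose (2 * ℓ + 1) : R) * (w ^ 2) ^ (n - ℓ) := by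
  rw [sub_eq_add_neg, add_pow, add_pow, ← sum_add_distrib,
    show 2 * n + 1 + 1 = 2 * (n + 1) by ring, sum_range_two_mul, mul_sum]
  refine sum_congr rfl fun ℓ hℓ => ?_
  have hℓn : ℓ ≤ n := Nat.lt_succ_iff.mp (mem_range.mp hℓ)
  rw [show 2 * n + 1 - 2 * ℓ = 2 * (n - ℓ) + 1 by omega,
    show 2 * n + 1 - (2 * ℓ + 1) = 2 * (n - ℓ) by omega,
    Odd.neg_pow ⟨n - ℓ, rfl⟩, Even.neg_pow ⟨n - ℓ, by ring⟩, pow_mul]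
  ring

/-- The coefficient `d(ℓ)`, extended to `ℓ = 0`, where it is `1`. -/
noncomputable def thiranCoeff (L ℓ : ℕ) : ℝ :=
  (-1 : ℝ) ^ ℓ * (Nat.choose L ℓ : ℝ) *
    ∏ k ∈ Finset.range ℓ, ((1/2 - (L : ℝ) + (k : ℝ)) / (3/2 + (k : ℝ)))

theorem thiranCoeff_succ_mul (L ℓ : ℕ) :
    thiranCoeff L (ℓ + 1) * ((2 * ℓ + 2) * (2 * ℓ + 3)) =
      thiranCoeff L ℓ * ((2 * L - 2 * ℓ) * (2 * L - 2 * ℓ - 1)) := by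
  have hchoose := Nat.cast_choose_succ_mul (R := ℝ) L ℓ
  unfold thiranCoeff
  rw [prod_range_succ, pow_succ]
  generalize ∏ k ∈ range ℓ, ((1/2 - (L : ℝ) + k) / (3/2 + k)) = P
  field_simp
  linear_combination P * (2 * L - 2 * ℓ - 1) * (2 * ℓ + 3) * hchoose

theorem thiranCoeff_eq (L ℓ : ℕ) :
    thiranCoeff L ℓ = ((2 * L + 1).choose (2 * ℓ + 1) : ℝ) / (2 * L + 1) := by
  rw [eq_div_iff (by positivity), mul_comm]
  induction ℓ with
  | zero => simp [thiranCoeff]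
  | succ ℓ ih =>
    have hchoose := Nat.cast_choose_add_two_mul (R := ℝ) (2 * L + 1) (2 * ℓ + 1)
    rw [show 2 * ℓ + 1 + 2 = 2 * (ℓ + 1) + 1 by ring] at hchoose
    push_cast at hchoose
    refine mul_right_cancel₀ (b := ((2 * ℓ + 2) * (2 * ℓ + 3) : ℝ)) (by positivity) ?_
    linear_combination (2 * L + 1 : ℝ) * thiranCoeff_succ_mul L ℓ
      + ((2 * L - 2 * ℓ) * (2 * L - 2 * ℓ - 1) : ℝ) * ih - hchoose

theorem thiran_D_closed_form (L : ℕ)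
    (d : ℕ → ℝ)
    (hd : ∀ ℓ, 1 ≤ ℓ → ℓ ≤ L →
      d ℓ = (-1 : ℝ) ^ ℓ * (Nat.choose L ℓ : ℝ) *
        ∏ k ∈ Finset.range ℓ, ((1/2 - (L : ℝ) + (k : ℝ)) / (3/2 + (k : ℝ))))
    (D : ℂ → ℂ)
    (hD : ∀ z : ℂ, z ≠ 0 →
      D z = 1 + ∑ ℓ ∈ Finset.Icc 1 L, (d ℓ : ℂ) * z ^ (-(ℓ : ℤ))) :
    ∀ w : ℂ, w ≠ 0 →
      D (w ^ 2) = (1 / (2 * (2 * (L : ℂ) + 1))) * (w ^ 2) ^ (-(L : ℤ)) *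
        ((1 + w) ^ (2 * L + 1) + (1 - w) ^ (2 * L + 1)) := by
  intro w hw
  have hw2 : w ^ 2 ≠ 0 := pow_ne_zero 2 hw
  have hD' : D (w ^ 2) = ∑ ℓ ∈ range (L + 1), (thiranCoeff L ℓ : ℂ) * (w ^ 2) ^ (-(ℓ : ℤ)) := by
    rw [hD _ hw2, sum_range_eq_add_Ico _ (by positivity : 0 < L + 1), Ico_add_one_right_eq_Icc]
    congr 1
    · simp [thiranCoeff]
    · exact sum_congr rfl fun ℓ hℓ => by rw [hd ℓ (mem_Icc.mp hℓ).1 (mem_Icc.mp hℓ).2]; rfl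
  rw [hD', one_add_pow_add_one_sub_pow, mul_sum, mul_sum]
  refine sum_congr rfl fun ℓ hℓ => ?_
  have hℓL : ℓ ≤ L := Nat.lt_succ_iff.mp (mem_range.mp hℓ)
  have hpow : (w ^ 2) ^ (-(L : ℤ)) * (w ^ 2) ^ (L - ℓ) = (w ^ 2) ^ (-(ℓ : ℤ)) := by
    rw [← zpow_natCast (w ^ 2) (L - ℓ), ← zpow_add₀ hw2, Nat.cast_sub hℓL]
    ring_nf
  rw [thiranCoeff_eq, ← hpow]
  push_cast
  field_simp
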